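/- arXiv:1510.01121 — 2 statements merged into one kernel-verified Lean document; each statement's English description precedes it below -/
import Mathlib

section
/- Let (S_n) be a centered random walk with i.i.d. increments of finite variance. There is a constant c > 0 such that for all n ≥ 1, E[ e^{S_n} / (∑_{1≤i≤n} e^{S_i}) ] ≤ c / √n. -/
/-!
Let `R_k` be the ratio of the statement computed for the walk whose increments are rotated
cyclically by `k`, i.e. `X_k, …, X_{n-1}, X_0, …, X_{k-1}`. The increments are exchangeable, so all
`R_k` have the mean of `R_0`. Deterministically, `∑_{k<n} R_k ≤ 1 + |S_n|`: along the periodic walk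
with `a_j = exp(S_j)` and `a_{j+n} = e^{S_n} a_j`, one has `R_k = a_{k+n} / W_k` for the window sums
`W_k = a_{k+1} + ⋯ + a_{k+n}`. Since `W_{k+1} - W_k = (e^{S_n} - 1) a_{k+1}` and `1 - 1/v ≤ log v`,
`|e^{S_n} - 1| R_{k+1} ≤ max(e^{S_n}, 1) |log W_{k+1} - log W_k|`, and the logarithmic increments
telescope to `log (W_n / W_0) = S_n`; when `S_n = 0` all `W_k` agree and the sum is exactly `1`.
Therefore `n E[R_0] ≤ 1 + E|S_n| ≤ 1 + √(n Var X_0)`.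
-/

open MeasureTheory ProbabilityTheory

/-- Partial sums of the increments `X`. -/
noncomputable def rwS {Ω : Type*} (X : ℕ → Ω → ℝ) (n : ℕ) (ω : Ω) : ℝ :=
  ∑ i ∈ Finset.range n, X i ω

open Finset Real

lemma one_sub_div_le_log_sub_log {p q : ℝ} (hp : 0 < p) (hq : 0 < q) :
    1 - p / q ≤ log q - log p := by
  rw [← log_div hq.ne' hp.ne', ← inv_div]
  exact one_sub_inv_le_log_of_pos (div_pos hq hp)

lemma sum_Icc_one_eq_sum_range {M : Type*} [AddCommMonoid M] (f : ℕ → M) (n : ℕ) :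
    ∑ i ∈ Icc 1 n, f i = ∑ i ∈ range n, f (i + 1) := by
  rw [← Ico_add_one_right_eq_Icc, sum_Ico_eq_sum_range, add_tsub_cancel_right]
  simp only [add_comm]

section WindowSum

noncomputable def windowSum (a : ℕ → ℝ) (n k : ℕ) : ℝ := ∑ i ∈ range n, a (k + i + 1)

variable {a : ℕ → ℝ} {n : ℕ} {y : ℝ}

lemma windowSum_succ (hper : ∀ j, a (j + n) = y * a j) (k : ℕ) :
    windowSum a n (k + 1) = windowSum a n k + (y - 1) * a (k + 1) := by
  have h := (sum_range_succ (fun i => a (k + i + 1)) n).symm.trans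
    (sum_range_succ' (fun i => a (k + i + 1)) n)
  simp only [show k + n + 1 = k + 1 + n by omega, hper, ← add_assoc, add_zero] at h
  rw [windowSum, windowSum]
  simp only [add_right_comm k 1]
  linarith

lemma windowSum_add_period (hper : ∀ j, a (j + n) = y * a j) (k : ℕ) :
    windowSum a n (k + n) = y * windowSum a n k := by
  rw [windowSum, windowSum, mul_sum]
  exact sum_congr rfl fun _ _ => by rw [← hper]; congr 1; omega

lemma le_windowSum (ha : ∀ j, 0 ≤ a j) (hn : 0 < n) (k : ℕ) : a (k + 1) ≤ windowSum a n k :=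
  single_le_sum (f := fun i => a (k + i + 1)) (fun _ _ => ha _) (mem_range.2 hn)

lemma windowSum_pos (ha : ∀ j, 0 < a j) (hn : 0 < n) (k : ℕ) : 0 < windowSum a n k :=
  (ha _).trans_le (le_windowSum (fun j => (ha j).le) hn k)

variable (ha : ∀ j, 0 < a j) (hn : 0 < n) (hper : ∀ j, a (j + n) = y * a j)
include ha hn hper

lemma sub_one_mul_div_windowSum_le (hy : 0 ≤ y) (k : ℕ) :
    (y - 1) * (a (k + 1 + n) / windowSum a n (k + 1))
      ≤ y * (log (windowSum a n (k + 1)) - log (windowSum a n k)) := by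
  have hW := windowSum_pos ha hn k
  have hW' := windowSum_pos ha hn (k + 1)
  have hid : (y - 1) * (a (k + 1 + n) / windowSum a n (k + 1))
      = y * (1 - windowSum a n k / windowSum a n (k + 1)) := by
    rw [hper]
    field_simp
    linear_combination (-y) * windowSum_succ hper k
  rw [hid]
  exact mul_le_mul_of_nonneg_left (one_sub_div_le_log_sub_log hW hW') hy

lemma one_sub_mul_div_windowSum_le (hy1 : y ≤ 1) (k : ℕ) :
    (1 - y) * (a (k + 1 + n) / windowSum a n (k + 1))
      ≤ log (windowSum a n k) - log (windowSum a n (k + 1)) := by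
  have hW := windowSum_pos ha hn k
  have hW' := windowSum_pos ha hn (k + 1)
  have hstep := windowSum_succ hper k
  have hle := le_windowSum (fun j => (ha j).le) hn k
  have hdecr : windowSum a n (k + 1) ≤ windowSum a n k := by nlinarith [ha (k + 1)]
  have hcontr : y * windowSum a n k ≤ windowSum a n (k + 1) := by nlinarith
  calc (1 - y) * (a (k + 1 + n) / windowSum a n (k + 1))
      = y * (windowSum a n k - windowSum a n (k + 1)) / windowSum a n (k + 1) := by
        rw [hper, hstep]; ring
    _ ≤ (windowSum a n k - windowSum a n (k + 1)) / windowSum a n k := by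
        rw [div_le_div_iff₀ hW' hW]
        nlinarith [mul_le_mul_of_nonneg_left hcontr (sub_nonneg.2 hdecr)]
    _ = 1 - windowSum a n (k + 1) / windowSum a n k := by field_simp
    _ ≤ _ := one_sub_div_le_log_sub_log hW' hW

lemma sum_log_windowSum_sub (hy : 0 < y) :
    ∑ k ∈ range n, (log (windowSum a n (k + 1)) - log (windowSum a n k)) = log y := by
  have hW := windowSum_pos ha hn 0
  have hWn := windowSum_add_period hper 0
  rw [zero_add] at hWn
  rw [sum_range_sub (fun k => log (windowSum a n k)), hWn, log_mul hy.ne' hW.ne']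
  ring

lemma sum_div_windowSum_le (hy : 0 < y) :
    ∑ k ∈ range n, a (k + n) / windowSum a n k ≤ 1 + |log y| := by
  have hshift : ∑ k ∈ range n, a (k + n) / windowSum a n k
      = ∑ k ∈ range n, a (k + 1 + n) / windowSum a n (k + 1) := by
    have hlast : a (n + n) / windowSum a n n = a (0 + n) / windowSum a n 0 := by
      have hWn := windowSum_add_period hper 0
      rw [zero_add] at hWn ⊢
      rw [hper, hWn, mul_div_mul_left _ _ hy.ne']
    have := (sum_range_succ (fun k => a (k + n) / windowSum a n k) n).symm.trans
      (sum_range_succ' (fun k => a (k + n) / windowSum a n k) n)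
    rw [hlast] at this
    linarith
  rw [hshift]
  rcases lt_trichotomy y 1 with hy1 | rfl | hy1
  · have hsum := sum_le_sum fun k (_ : k ∈ range n) =>
      one_sub_mul_div_windowSum_le ha hn hper hy1.le k
    have htel :
        ∑ k ∈ range n, (log (windowSum a n k) - log (windowSum a n (k + 1))) = -log y := by
      rw [← sum_log_windowSum_sub ha hn hper hy, ← sum_neg_distrib]
      simp only [neg_sub]
    rw [← mul_sum, htel] at hsum
    have hlog : y - 1 ≤ y * log y := by
      have := mul_le_mul_of_nonneg_left (one_sub_inv_le_log_of_pos hy) hy.le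
      rwa [mul_sub, mul_one, mul_inv_cancel₀ hy.ne'] at this
    rw [abs_of_neg (log_neg hy hy1)]
    refine le_of_mul_le_mul_left ?_ (sub_pos.2 hy1)
    nlinarith
  · have hconst : ∀ k, windowSum a n k = windowSum a n 0 := by
      intro k
      induction k with
      | zero => rfl
      | succ k ih => rw [windowSum_succ hper, ih]; ring
    have hW := windowSum_pos ha hn 0
    simp only [hper, one_mul, hconst, log_one, abs_zero, add_zero, ← sum_div]
    rw [div_le_one hW, windowSum]
    simp only [zero_add, le_refl]
  · have hsum := sum_le_sum fun k (_ : k ∈ range n) =>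
      sub_one_mul_div_windowSum_le ha hn hper hy.le k
    rw [← mul_sum, ← mul_sum, sum_log_windowSum_sub ha hn hper hy] at hsum
    have hlog := log_le_sub_one_of_pos hy
    rw [abs_of_pos (log_pos hy1)]
    refine le_of_mul_le_mul_left ?_ (sub_pos.2 hy1)
    nlinarith [log_pos hy1]

end WindowSum

noncomputable def expRatio (x : ℕ → ℝ) (n : ℕ) : ℝ :=
  exp (∑ j ∈ range n, x j) / ∑ i ∈ Icc 1 n, exp (∑ j ∈ range i, x j)

lemma expRatio_congr {x x' : ℕ → ℝ} {n : ℕ} (h : ∀ j < n, x j = x' j) :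
    expRatio x n = expRatio x' n := by
  have hS : ∀ i ≤ n, ∑ j ∈ range i, x j = ∑ j ∈ range i, x' j := fun i hi =>
    sum_congr rfl fun j hj => h j ((mem_range.1 hj).trans_le hi)
  rw [expRatio, expRatio, hS n le_rfl]
  exact congrArg _ (sum_congr rfl fun i hi => by rw [hS i (mem_Icc.1 hi).2])

lemma expRatio_nonneg (x : ℕ → ℝ) (n : ℕ) : 0 ≤ expRatio x n := by
  unfold expRatio; positivity

lemma expRatio_le_one (x : ℕ → ℝ) {n : ℕ} (hn : 0 < n) : expRatio x n ≤ 1 :=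
  div_le_one_of_le₀ (single_le_sum (f := fun i => exp (∑ j ∈ range i, x j))
    (fun _ _ => (exp_pos _).le) (mem_Icc.2 ⟨hn, le_rfl⟩)) (by positivity)

lemma measurable_expRatio (n : ℕ) : Measurable fun x : ℕ → ℝ => expRatio x n := by
  unfold expRatio; fun_prop

lemma sum_range_rotate_eq_sub (x : ℕ → ℝ) (n k i : ℕ) :
    ∑ j ∈ range i, x ((k + j) % n)
      = ∑ j ∈ range (k + i), x (j % n) - ∑ j ∈ range k, x (j % n) := by
  rw [sum_range_add]; ring

lemma exp_sum_range_mod_add_period (x : ℕ → ℝ) (n j : ℕ) :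
    exp (∑ i ∈ range (j + n), x (i % n))
      = exp (∑ i ∈ range n, x i) * exp (∑ i ∈ range j, x (i % n)) := by
  rw [← exp_add, add_comm j, sum_range_add]
  congr 2
  · exact sum_congr rfl fun i hi => by rw [Nat.mod_eq_of_lt (mem_range.1 hi)]
  · exact sum_congr rfl fun i _ => by rw [Nat.add_mod_left]

lemma expRatio_rotate (x : ℕ → ℝ) (n k : ℕ) :
    expRatio (fun j => x ((k + j) % n)) n
      = exp (∑ i ∈ range (k + n), x (i % n))
        / windowSum (fun j => exp (∑ i ∈ range j, x (i % n))) n k := by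
  simp only [expRatio, sum_range_rotate_eq_sub, exp_sub, ← sum_div, windowSum,
    sum_Icc_one_eq_sum_range]
  rw [div_div_div_cancel_right₀ (exp_pos _).ne']
  simp only [add_assoc]

theorem sum_expRatio_rotate_le (x : ℕ → ℝ) {n : ℕ} (hn : 0 < n) :
    ∑ k ∈ range n, expRatio (fun j => x ((k + j) % n)) n ≤ 1 + |∑ j ∈ range n, x j| := by
  simp only [expRatio_rotate]
  have := sum_div_windowSum_le (a := fun j => exp (∑ i ∈ range j, x (i % n)))
    (fun _ => exp_pos _) hn (exp_sum_range_mod_add_period x n) (exp_pos _)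
  rwa [log_exp] at this

section Exchangeability

variable {Ω : Type*} [MeasurableSpace Ω] {μ : Measure Ω} {X : ℕ → Ω → ℝ}

lemma map_reindex_eq_pi (hmeas : ∀ i, Measurable (X i)) (hindep : iIndepFun X μ)
    (hident : ∀ i, IdentDistrib (X i) (X 0) μ μ) {n : ℕ} {g : Fin n → ℕ} (hg : g.Injective) :
    μ.map (fun ω i => X (g i) ω) = Measure.pi fun _ => μ.map (X 0) := by
  rw [(hindep.precomp hg).map_fun_eq_pi_map fun _ => (hmeas _).aemeasurable]
  simp_rw [(hident _).map_eq]

lemma injective_add_mod {n : ℕ} (k : ℕ) : Function.Injective fun i : Fin n => (k + i) % n := by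
  intro i i' h
  have := Nat.ModEq.add_left_cancel' k h
  rwa [Nat.ModEq, Nat.mod_eq_of_lt i.2, Nat.mod_eq_of_lt i'.2, Fin.val_inj] at this

lemma identDistrib_rotate (hmeas : ∀ i, Measurable (X i)) (hindep : iIndepFun X μ)
    (hident : ∀ i, IdentDistrib (X i) (X 0) μ μ) {n : ℕ} (hn : 0 < n) (k k' : ℕ) :
    IdentDistrib (fun ω j => X ((k + j) % n) ω) (fun ω j => X ((k' + j) % n) ω) μ μ := by
  let periodize : (Fin n → ℝ) → ℕ → ℝ := fun v j => v ⟨j % n, Nat.mod_lt j hn⟩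
  have hperiodize : Measurable periodize := measurable_pi_lambda _ fun _ => measurable_pi_apply _
  have hfactor : ∀ k, (fun ω j => X ((k + j) % n) ω)
      = periodize ∘ fun ω (i : Fin n) => X ((k + i) % n) ω := fun k => by
    funext ω j
    simp only [Function.comp_apply, periodize, Nat.add_mod_mod]
  have hlaw : ∀ k, AEMeasurable (fun ω (i : Fin n) => X ((k + i) % n) ω) μ := fun k =>
    (measurable_pi_lambda _ fun _ => hmeas _).aemeasurable
  rw [hfactor k, hfactor k']
  refine IdentDistrib.comp ⟨hlaw k, hlaw k', ?_⟩ hperiodize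
  rw [map_reindex_eq_pi hmeas hindep hident (injective_add_mod k),
    map_reindex_eq_pi hmeas hindep hident (injective_add_mod k')]

lemma integral_expRatio_rotate (hmeas : ∀ i, Measurable (X i)) (hindep : iIndepFun X μ)
    (hident : ∀ i, IdentDistrib (X i) (X 0) μ μ) {n : ℕ} (hn : 0 < n) (k : ℕ) :
    ∫ ω, expRatio (fun j => X ((k + j) % n) ω) n ∂μ = ∫ ω, expRatio (fun j => X j ω) n ∂μ := by
  refine (((identDistrib_rotate hmeas hindep hident hn k 0).comp
    (measurable_expRatio n)).integral_eq).trans (integral_congr_ae (ae_of_all _ fun ω => ?_))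
  exact expRatio_congr fun j hj => by simp [Nat.mod_eq_of_lt hj]

lemma integrable_expRatio_rotate [IsFiniteMeasure μ] (hmeas : ∀ i, Measurable (X i))
    {n : ℕ} (hn : 0 < n) (k : ℕ) :
    Integrable (fun ω => expRatio (fun j => X ((k + j) % n) ω) n) μ := by
  refine Integrable.of_bound ((measurable_expRatio n).comp
    (measurable_pi_lambda _ fun _ => hmeas _)).aestronglyMeasurable 1 (ae_of_all _ fun ω => ?_)
  rw [Real.norm_of_nonneg (expRatio_nonneg _ _)]
  exact expRatio_le_one _ hn

end Exchangeability

section Moments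

variable {Ω : Type*} [MeasurableSpace Ω] {μ : Measure Ω} [IsProbabilityMeasure μ]

lemma integral_abs_le_sqrt_variance {Z : Ω → ℝ} (hZ : MemLp Z 2 μ) (h0 : μ[Z] = 0) :
    ∫ ω, |Z ω| ∂μ ≤ √Var[Z; μ] := by
  have hsq : μ[(|Z|) ^ 2] = Var[Z; μ] := by
    rw [variance_of_integral_eq_zero hZ.aemeasurable h0]
    simp only [Pi.pow_apply, Pi.abs_apply, sq_abs]
  have hvar := variance_nonneg (|Z|) μ
  rw [variance_eq_sub hZ.abs, hsq] at hvar
  exact le_sqrt_of_sq_le (by simpa only [Pi.abs_apply] using sub_nonneg.1 hvar)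

variable {X : ℕ → Ω → ℝ}

omit [IsProbabilityMeasure μ] in
lemma variance_sum_range (hindep : iIndepFun X μ) (hident : ∀ i, IdentDistrib (X i) (X 0) μ μ)
    (hL2 : MemLp (X 0) 2 μ) (n : ℕ) :
    Var[fun ω => ∑ i ∈ range n, X i ω; μ] = n * Var[X 0; μ] := by
  rw [← sum_fn, IndepFun.variance_sum (fun i _ => (hident i).symm.memLp_snd hL2)
    fun i _ j _ hij => hindep.indepFun hij]
  simp [(hident _).variance_eq]

lemma integral_abs_sum_range_le (hindep : iIndepFun X μ)
    (hident : ∀ i, IdentDistrib (X i) (X 0) μ μ) (hL2 : MemLp (X 0) 2 μ) (hmean : μ[X 0] = 0)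
    (n : ℕ) :
    ∫ ω, |∑ i ∈ range n, X i ω| ∂μ ≤ √n * √Var[X 0; μ] := by
  have hL2i : ∀ i, MemLp (X i) 2 μ := fun i => (hident i).symm.memLp_snd hL2
  have hmean_sum : ∫ ω, ∑ i ∈ range n, X i ω ∂μ = 0 := by
    rw [integral_finsetSum _ fun i _ => (hL2i i).integrable one_le_two]
    exact sum_eq_zero fun i _ => (hident i).integral_eq.trans hmean
  have := integral_abs_le_sqrt_variance (memLp_finsetSum _ fun i _ => hL2i i) hmean_sum
  rwa [variance_sum_range hindep hident hL2, sqrt_mul (Nat.cast_nonneg n)] at this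

end Moments

lemma natCast_mul_integral_expRatio_le {Ω : Type*} [MeasurableSpace Ω] {μ : Measure Ω}
    [IsProbabilityMeasure μ] {X : ℕ → Ω → ℝ} (hmeas : ∀ i, Measurable (X i))
    (hindep : iIndepFun X μ) (hident : ∀ i, IdentDistrib (X i) (X 0) μ μ)
    (hint : Integrable (X 0) μ) {n : ℕ} (hn : 0 < n) :
    n * ∫ ω, expRatio (fun j => X j ω) n ∂μ ≤ 1 + ∫ ω, |∑ i ∈ range n, X i ω| ∂μ := by
  have hint_abs : Integrable (fun ω => |∑ i ∈ range n, X i ω|) μ :=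
    (integrable_finsetSum _ fun i _ => (hident i).integrable_iff.2 hint).abs
  calc (n : ℝ) * ∫ ω, expRatio (fun j => X j ω) n ∂μ
      = ∑ k ∈ range n, ∫ ω, expRatio (fun j => X ((k + j) % n) ω) n ∂μ := by
        rw [sum_congr rfl fun k _ => integral_expRatio_rotate hmeas hindep hident hn k,
          sum_const, card_range, nsmul_eq_mul]
    _ = ∫ ω, ∑ k ∈ range n, expRatio (fun j => X ((k + j) % n) ω) n ∂μ :=
        (integral_finsetSum _ fun k _ => integrable_expRatio_rotate hmeas hn k).symm
    _ ≤ ∫ ω, (1 + |∑ i ∈ range n, X i ω|) ∂μ :=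
        integral_mono (integrable_finsetSum _ fun k _ => integrable_expRatio_rotate hmeas hn k)
          ((integrable_const 1).add hint_abs) fun ω => sum_expRatio_rotate_le (X · ω) hn
    _ = 1 + ∫ ω, |∑ i ∈ range n, X i ω| ∂μ := by
        rw [integral_add (integrable_const 1) hint_abs, integral_const, probReal_univ, one_smul]

theorem stmt_4_general {Ω : Type*} [MeasurableSpace Ω] (μ : Measure Ω) [IsProbabilityMeasure μ]
    (X : ℕ → Ω → ℝ) (hmeas : ∀ i, Measurable (X i))
    (hindep : iIndepFun X μ)
    (hident : ∀ i, IdentDistrib (X i) (X 0) μ μ)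
    (hL2 : MemLp (X 0) 2 μ) (hmean : μ[X 0] = 0) :
    ∃ c : ℝ, 0 < c ∧ ∀ n : ℕ, 1 ≤ n →
      ∫ ω, Real.exp (rwS X n ω) / (∑ i ∈ Finset.Icc 1 n, Real.exp (rwS X i ω)) ∂μ
        ≤ c / Real.sqrt n := by
  refine ⟨1 + √Var[X 0; μ], by positivity, fun n hn => ?_⟩
  have hcyclic := natCast_mul_integral_expRatio_le hmeas hindep hident
    (hL2.integrable one_le_two) hn
  have hmoment := integral_abs_sum_range_le hindep hident hL2 hmean n
  have hsqrt : √(n : ℝ) * √n = n := mul_self_sqrt n.cast_nonneg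
  have hone : 1 ≤ √(n : ℝ) := one_le_sqrt.2 (Nat.one_le_cast.2 hn)
  change ∫ ω, expRatio (fun j => X j ω) n ∂μ ≤ _
  rw [le_div_iff₀ (by positivity)]
  refine le_of_mul_le_mul_right ?_ (zero_lt_one.trans_le hone)
  rw [mul_assoc, hsqrt, mul_comm]
  nlinarith [sqrt_nonneg (Var[X 0; μ])]

theorem stmt_4 {Ω : Type*} [MeasurableSpace Ω] (μ : Measure Ω) [IsProbabilityMeasure μ]
    (X : ℕ → Ω → ℝ) (hmeas : ∀ i, Measurable (X i))
    (hindep : iIndepFun X μ)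
    (hident : ∀ i, IdentDistrib (X i) (X 0) μ μ)
    (hL2 : MemLp (X 0) 2 μ) (hmean : μ[X 0] = 0)
    (hvar : 0 < variance (X 0) μ) :
    ∃ c : ℝ, 0 < c ∧ ∀ n : ℕ, 1 ≤ n →
      ∫ ω, Real.exp (rwS X n ω) / (∑ i ∈ Finset.Icc 1 n, Real.exp (rwS X i ω)) ∂μ
        ≤ c / Real.sqrt n :=
  stmt_4_general μ X hmeas hindep hident hL2 hmean
end

section
/- Let σ > 0 and define, for a, b > 0, the constant 𝒞_{a,b} in terms of the Brownian meander (m_s)_{0≤s≤1} by 𝒞_{a,b} = 2 c₁⁺ c₂⁺ E[ Ψ^{a,b}(σ m₁, σ(overline{m}₁ - m₁)) ; max_{0≤s≤1} σ(overline{m}_s - m_s) ≤ √2 a ], where Ψ^{a,b}(x,h) = c₂⁺ P( σ m₁ > (√2 b - x) ∨ h, σ(overline{m}₁ - m₁) ≤ (√2 a - h)₊ ∧ x, max_{0≤s≤1} σ(m_s - underline{m}_{[s,1]}) ≤ √2 a ) with constants c₁⁺, c₂⁺ > 0. Then for all a,b > 0: (i) 𝒞_{a,b} ≤ c e^{-b²/(4σ²)},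 and (ii) 𝒞_{a,b} ≤ (4c/σ²) a², for some constant c depending only on c₁⁺, c₂⁺, σ. -/
open MeasureTheory ProbabilityTheory

/-- The function `Ψ^{a,b}(x,h)` built from the Brownian meander `m`. -/
noncomputable def meanderPsi {Ω : Type*} [MeasurableSpace Ω] (μ : Measure Ω)
    (σ c₂ : ℝ) (m : ℝ → Ω → ℝ) (a b x h : ℝ) : ℝ :=
  c₂ * (μ {ω | max (Real.sqrt 2 * b - x) h < σ * m 1 ω ∧
      σ * ((sSup ((fun t => m t ω) '' (Set.Icc (0 : ℝ) 1))) - m 1 ω) ≤ min (max (Real.sqrt 2 * a - h) 0) x ∧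
      ∀ s ∈ Set.Icc (0 : ℝ) 1,
        σ * (m s ω - sInf ((fun t => m t ω) '' (Set.Icc s 1))) ≤ Real.sqrt 2 * a}).toReal

/-- The constant `𝒞_{a,b}` of the paper, defined from the Brownian meander `m`. -/
noncomputable def meanderC {Ω : Type*} [MeasurableSpace Ω] (μ : Measure Ω)
    (σ c₁ c₂ : ℝ) (m : ℝ → Ω → ℝ) (a b : ℝ) : ℝ :=
  2 * c₁ * c₂ *
    ∫ ω in {ω | ∀ s ∈ Set.Icc (0 : ℝ) 1,
        σ * ((sSup ((fun t => m t ω) '' (Set.Icc (0 : ℝ) s))) - m s ω) ≤ Real.sqrt 2 * a},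
      meanderPsi μ σ c₂ m a b (σ * m 1 ω)
        (σ * ((sSup ((fun t => m t ω) '' (Set.Icc (0 : ℝ) 1))) - m 1 ω)) ∂μ

lemma toReal_prob_le_one {Ω : Type*} [MeasurableSpace Ω] (μ : Measure Ω)
    [IsProbabilityMeasure μ] (s : Set Ω) : (μ s).toReal ≤ 1 := by
  have := ENNReal.toReal_mono ENNReal.one_ne_top (prob_le_one (μ := μ) (s := s))
  simpa using this

lemma toReal_le_of_subset {Ω : Type*} [MeasurableSpace Ω] {μ : Measure Ω} {s t : Set Ω}
    {r : ℝ} (hst : s ⊆ t) (ht : μ t = ENNReal.ofReal r) (hr : 0 ≤ r) : (μ s).toReal ≤ r := by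
  refine le_trans (ENNReal.toReal_mono (by rw [ht]; exact ENNReal.ofReal_ne_top)
    (measure_mono hst)) ?_
  rw [ht, ENNReal.toReal_ofReal hr]

lemma toReal_le_of_subset_le {Ω : Type*} [MeasurableSpace Ω] {μ : Measure Ω} {s t : Set Ω}
    {r : ℝ} (hst : s ⊆ t) (ht : μ t ≤ ENNReal.ofReal r) (hr : 0 ≤ r) : (μ s).toReal ≤ r := by
  refine le_trans (ENNReal.toReal_mono ENNReal.ofReal_ne_top
    ((measure_mono hst).trans ht)) ?_
  rw [ENNReal.toReal_ofReal hr]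

/-- A generic bound on a set integral of a nonnegative function that is bounded by `C₁`
off a (possibly nonmeasurable) set `T` and by `C₂` everywhere. -/
lemma setIntegral_le_split {Ω : Type*} [MeasurableSpace Ω] (μ : Measure Ω)
    [IsProbabilityMeasure μ] (S T : Set Ω) (f : Ω → ℝ) (C₁ C₂ : ℝ)
    (hC₁ : 0 ≤ C₁) (hC₂ : 0 ≤ C₂) (hf0 : ∀ ω, 0 ≤ f ω)
    (h₁ : ∀ ω, ω ∉ T → f ω ≤ C₁) (h₂ : ∀ ω, f ω ≤ C₂) :
    ∫ ω in S, f ω ∂μ ≤ C₁ + C₂ * (μ T).toReal := by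
  have hb : ∀ ω, ENNReal.ofReal ‖f ω‖ ≤
      (fun _ => ENNReal.ofReal C₁) ω + T.indicator (fun _ => ENNReal.ofReal C₂) ω := by
    intro ω
    rw [Real.norm_of_nonneg (hf0 ω)]
    by_cases h : ω ∈ T
    · rw [Set.indicator_of_mem h]
      exact le_trans (ENNReal.ofReal_le_ofReal (h₂ ω)) le_add_self
    · rw [Set.indicator_of_notMem h]
      simpa using ENNReal.ofReal_le_ofReal (h₁ ω h)
  have key : (∫⁻ ω, ENNReal.ofReal ‖f ω‖ ∂(μ.restrict S)) ≤
      ENNReal.ofReal C₁ + ENNReal.ofReal C₂ * μ T := by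
    refine le_trans (lintegral_mono hb) ?_
    rw [lintegral_add_left measurable_const]
    gcongr
    · calc ∫⁻ _, ENNReal.ofReal C₁ ∂(μ.restrict S)
          = ENNReal.ofReal C₁ * (μ.restrict S) Set.univ := lintegral_const _
        _ ≤ ENNReal.ofReal C₁ * 1 := by
            gcongr
            rw [Measure.restrict_apply_univ]
            exact prob_le_one
        _ = ENNReal.ofReal C₁ := mul_one _
    · calc ∫⁻ ω, T.indicator (fun _ => ENNReal.ofReal C₂) ω ∂(μ.restrict S)
          ≤ ENNReal.ofReal C₂ * (μ.restrict S) T := lintegral_indicator_const_le _ _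
        _ ≤ ENNReal.ofReal C₂ * μ T := by
            gcongr
            exact Measure.restrict_le_self
  calc ∫ ω in S, f ω ∂μ ≤ ‖∫ ω in S, f ω ∂μ‖ := le_abs_self _
    _ ≤ (∫⁻ ω, ENNReal.ofReal ‖f ω‖ ∂(μ.restrict S)).toReal :=
        norm_integral_le_lintegral_norm f
    _ ≤ (ENNReal.ofReal C₁ + ENNReal.ofReal C₂ * μ T).toReal := by
        refine ENNReal.toReal_mono ?_ key
        exact ENNReal.add_ne_top.2 ⟨ENNReal.ofReal_ne_top,
          ENNReal.mul_ne_top ENNReal.ofReal_ne_top (measure_ne_top μ T)⟩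
    _ = C₁ + C₂ * (μ T).toReal := by
        rw [ENNReal.toReal_add ENNReal.ofReal_ne_top
          (ENNReal.mul_ne_top ENNReal.ofReal_ne_top (measure_ne_top μ T)),
          ENNReal.toReal_mul, ENNReal.toReal_ofReal hC₁, ENNReal.toReal_ofReal hC₂]

theorem stmt_13 {Ω : Type*} [MeasurableSpace Ω] (μ : Measure Ω) [IsProbabilityMeasure μ]
    (σ c₁ c₂ : ℝ) (hσ : 0 < σ) (hc₁ : 0 < c₁) (hc₂ : 0 < c₂)
    (m : ℝ → Ω → ℝ)
    (htail : ∀ x : ℝ, 0 ≤ x → μ {ω | x ≤ m 1 ω} = ENNReal.ofReal (Real.exp (-x ^ 2 / 2)))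
    (hBY : ∀ y : ℝ, 0 < y →
      μ {ω | ∀ s ∈ Set.Icc (0 : ℝ) 1, m s ω - sInf ((fun t => m t ω) '' (Set.Icc s 1)) ≤ y}
        ≤ ENNReal.ofReal (1 - Real.exp (-2 * y ^ 2))) :
    ∃ c : ℝ, 0 < c ∧ ∀ a b : ℝ, 0 < a → 0 < b →
      meanderC μ σ c₁ c₂ m a b ≤ c * Real.exp (-b ^ 2 / (4 * σ ^ 2)) ∧
      meanderC μ σ c₁ c₂ m a b ≤ 4 * c / σ ^ 2 * a ^ 2 := by
  have h2 : Real.sqrt 2 ^ 2 = 2 := Real.sq_sqrt (by norm_num)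
  have hs0 : (0 : ℝ) < Real.sqrt 2 := Real.sqrt_pos.2 (by norm_num)
  refine ⟨4 * c₁ * c₂ ^ 2, by positivity, fun a b ha hb => ?_⟩
  set f : Ω → ℝ := fun ω => meanderPsi μ σ c₂ m a b (σ * m 1 ω)
      (σ * ((sSup ((fun t => m t ω) '' (Set.Icc (0 : ℝ) 1))) - m 1 ω)) with hf
  set S : Set Ω := {ω | ∀ s ∈ Set.Icc (0 : ℝ) 1,
      σ * ((sSup ((fun t => m t ω) '' (Set.Icc (0 : ℝ) s))) - m s ω) ≤ Real.sqrt 2 * a} with hS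
  have hCdef : meanderC μ σ c₁ c₂ m a b = 2 * c₁ * c₂ * ∫ ω in S, f ω ∂μ := rfl
  have hf0 : ∀ ω, 0 ≤ f ω := fun ω => mul_nonneg hc₂.le ENNReal.toReal_nonneg
  have hub : ∀ ω, f ω ≤ c₂ := by
    intro ω
    calc f ω ≤ c₂ * 1 := mul_le_mul_of_nonneg_left (toReal_prob_le_one μ _) hc₂.le
      _ = c₂ := mul_one _
  set E : ℝ := Real.exp (-b ^ 2 / (4 * σ ^ 2)) with hE
  have hEpos : 0 < E := Real.exp_pos _
  -- Part (i)
  set x₀ : ℝ := b / (Real.sqrt 2 * σ) with hx₀def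
  have hx₀ : 0 < x₀ := by positivity
  have hTmeas : μ {ω | x₀ ≤ m 1 ω} = ENNReal.ofReal E := by
    rw [htail x₀ hx₀.le]
    congr 1
    rw [hE]
    congr 1
    rw [hx₀def]
    rw [div_pow, mul_pow, h2]
    ring
  have hkey : Real.sqrt 2 * b - σ * x₀ = σ * x₀ := by
    rw [hx₀def]
    field_simp
    linear_combination h2
  have h₁ : ∀ ω, ω ∉ {ω | x₀ ≤ m 1 ω} → f ω ≤ c₂ * E := by
    intro ω hω
    have hmω : m 1 ω < x₀ := lt_of_not_ge hω
    have hsub : {ω' | max (Real.sqrt 2 * b - σ * m 1 ω)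
          (σ * ((sSup ((fun t => m t ω) '' (Set.Icc (0 : ℝ) 1))) - m 1 ω)) < σ * m 1 ω' ∧
        σ * ((sSup ((fun t => m t ω') '' (Set.Icc (0 : ℝ) 1))) - m 1 ω') ≤
          min (max (Real.sqrt 2 * a -
            σ * ((sSup ((fun t => m t ω) '' (Set.Icc (0 : ℝ) 1))) - m 1 ω)) 0) (σ * m 1 ω) ∧
        ∀ s ∈ Set.Icc (0 : ℝ) 1,
          σ * (m s ω' - sInf ((fun t => m t ω') '' (Set.Icc s 1))) ≤ Real.sqrt 2 * a}
        ⊆ {ω' | x₀ ≤ m 1 ω'} := by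
      intro ω' hω'
      obtain ⟨h1', _, _⟩ := hω'
      have hlt : Real.sqrt 2 * b - σ * m 1 ω < σ * m 1 ω' :=
        lt_of_le_of_lt (le_max_left _ _) h1'
      have hσx : σ * x₀ < σ * m 1 ω' := by nlinarith [mul_lt_mul_of_pos_left hmω hσ]
      exact le_of_lt ((mul_lt_mul_iff_right₀ hσ).1 hσx)
    exact mul_le_mul_of_nonneg_left (toReal_le_of_subset hsub hTmeas hEpos.le) hc₂.le
  have bound1 : ∫ ω in S, f ω ∂μ ≤ c₂ * E + c₂ * (μ {ω | x₀ ≤ m 1 ω}).toReal :=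
    setIntegral_le_split μ S _ f (c₂ * E) c₂ (by positivity) hc₂.le hf0 h₁ hub
  have bound1' : ∫ ω in S, f ω ∂μ ≤ 2 * c₂ * E := by
    rw [hTmeas, ENNReal.toReal_ofReal hEpos.le] at bound1
    linarith
  -- Part (ii)
  set yv : ℝ := Real.sqrt 2 * a / σ with hydef
  have hy : 0 < yv := by positivity
  have hy2 : 2 * yv ^ 2 = 4 * a ^ 2 / σ ^ 2 := by
    rw [hydef, div_pow, mul_pow, h2]
    ring
  have h₁' : ∀ ω, ω ∉ (∅ : Set Ω) → f ω ≤ c₂ * (4 * a ^ 2 / σ ^ 2) := by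
    intro ω _
    have hsub : {ω' | max (Real.sqrt 2 * b - σ * m 1 ω)
          (σ * ((sSup ((fun t => m t ω) '' (Set.Icc (0 : ℝ) 1))) - m 1 ω)) < σ * m 1 ω' ∧
        σ * ((sSup ((fun t => m t ω') '' (Set.Icc (0 : ℝ) 1))) - m 1 ω') ≤
          min (max (Real.sqrt 2 * a -
            σ * ((sSup ((fun t => m t ω) '' (Set.Icc (0 : ℝ) 1))) - m 1 ω)) 0) (σ * m 1 ω) ∧
        ∀ s ∈ Set.Icc (0 : ℝ) 1,
          σ * (m s ω' - sInf ((fun t => m t ω') '' (Set.Icc s 1))) ≤ Real.sqrt 2 * a}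
        ⊆ {ω' | ∀ s ∈ Set.Icc (0 : ℝ) 1, m s ω' - sInf ((fun t => m t ω') '' (Set.Icc s 1)) ≤ yv} := by
      intro ω' hω'
      obtain ⟨_, _, h3'⟩ := hω'
      intro s hs
      have := h3' s hs
      rw [hydef, le_div_iff₀ hσ]
      linarith [this]
    have hexp1 : Real.exp (-2 * yv ^ 2) ≤ 1 := by
      rw [← Real.exp_zero]
      exact Real.exp_le_exp.2 (by nlinarith)
    have hlin : 1 - Real.exp (-2 * yv ^ 2) ≤ 4 * a ^ 2 / σ ^ 2 := by
      have := Real.add_one_le_exp (-2 * yv ^ 2)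
      rw [← hy2]
      linarith
    calc f ω ≤ c₂ * (1 - Real.exp (-2 * yv ^ 2)) :=
        mul_le_mul_of_nonneg_left (toReal_le_of_subset_le hsub (hBY yv hy) (by linarith)) hc₂.le
      _ ≤ c₂ * (4 * a ^ 2 / σ ^ 2) := mul_le_mul_of_nonneg_left hlin hc₂.le
  have bound2 : ∫ ω in S, f ω ∂μ ≤ c₂ * (4 * a ^ 2 / σ ^ 2) := by
    have := setIntegral_le_split μ S ∅ f (c₂ * (4 * a ^ 2 / σ ^ 2)) c₂
      (by positivity) hc₂.le hf0 h₁' hub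
    simpa using this
  constructor
  · rw [hCdef]
    calc 2 * c₁ * c₂ * ∫ ω in S, f ω ∂μ ≤ 2 * c₁ * c₂ * (2 * c₂ * E) := by
          exact mul_le_mul_of_nonneg_left bound1' (by positivity)
      _ = 4 * c₁ * c₂ ^ 2 * E := by ring
  · rw [hCdef]
    calc 2 * c₁ * c₂ * ∫ ω in S, f ω ∂μ ≤ 2 * c₁ * c₂ * (c₂ * (4 * a ^ 2 / σ ^ 2)) := by
          exact mul_le_mul_of_nonneg_left bound2 (by positivity)
      _ = 8 * c₁ * c₂ ^ 2 * a ^ 2 / σ ^ 2 := by ring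
      _ ≤ 16 * c₁ * c₂ ^ 2 * a ^ 2 / σ ^ 2 := by
          rw [div_le_div_iff_of_pos_right (by positivity : (0:ℝ) < σ ^ 2)]
          nlinarith [mul_pos (mul_pos hc₁ (mul_pos hc₂ hc₂)) (mul_pos ha ha)]
      _ = 4 * (4 * c₁ * c₂ ^ 2) / σ ^ 2 * a ^ 2 := by ring
end
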